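/- arXiv:0705.3969 — 5 statements merged into one kernel-verified Lean document; each statement's English description precedes it below -/
import Mathlib

section
/- Let d ≥ 1 be an integer and H > 0 a real constant. Let (λ_j)_{j≥1} be a nondecreasing sequence of positive real numbers with λ_j → ∞. Assume that for every real λ ≥ 0 one has Σ_{j=1}^∞ (λ − λ_j)_+ ≥ (2/(d+2)) · H^{−1} · λ_1^{−d/2} · (λ − λ_1)_+^{1+d/2}. Then for every k ∈ ℕ, k ≥ 1, one has Σ_{j=1}^k (λ_j − λ_1) ≤ (d/(d+2)) · H^{2/d} · λ_1 · k^{1+2/d}. -/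
open Filter Finset

/-!
Evaluate the Riesz-mean bound at `μ = λ_{k+1}`: all terms with `j > k` vanish, so with
`t = μ - λ_1` and `A = (2 / (d + 2)) H⁻¹ λ_1 ^ (-d / 2)`,
`∑_{j ≤ k} (λ_j - λ_1) = k t - ∑_{j ≤ k} (μ - λ_j) ≤ k t - A t ^ (1 + d / 2)`.
The right-hand side is at most the Legendre transform of `t ↦ A t ^ (1 + d / 2)` at `k`, which
Young's inequality with the conjugate exponents `1 + d / 2` and `1 + 2 / d` (after rescaling)
bounds by `(d / (d + 2)) H ^ (2 / d) λ_1 k ^ (1 + 2 / d)`.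
-/

theorem Real.young_inequality_of_nonneg_of_pos {a b c p q : ℝ} (ha : 0 ≤ a) (hb : 0 ≤ b)
    (hc : 0 < c) (hpq : p.HolderConjugate q) :
    a * b ≤ c ^ p * a ^ p / p + (c ^ q)⁻¹ * b ^ q / q := by
  calc a * b = c * a * (b / c) := by field_simp
    _ ≤ (c * a) ^ p / p + (b / c) ^ q / q :=
      Real.young_inequality_of_nonneg (mul_nonneg hc.le ha) (div_nonneg hb hc.le) hpq
    _ = _ := by rw [Real.mul_rpow hc.le ha, Real.div_rpow hb hc.le]; ring

theorem mul_le_riesz_add_legendre {d H L s t : ℝ} (hd : 0 < d) (hH : 0 < H) (hL : 0 < L)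
    (hs : 0 ≤ s) (ht : 0 ≤ t) :
    s * t ≤ 2 / (d + 2) * H⁻¹ * L ^ (-d / 2) * t ^ (1 + d / 2)
      + d / (d + 2) * H ^ (2 / d) * L * s ^ (1 + 2 / d) := by
  set p := 1 + d / 2
  set q := 1 + 2 / d
  have hp : 0 < p := by positivity
  have hpq : p.HolderConjugate q :=
    ⟨by simp only [p, q]; field_simp; ring, hp, by positivity⟩
  set X := H * L ^ (d / 2)
  have hX : 0 < X := by positivity
  have hXp : (X ^ (-p⁻¹)) ^ p = H⁻¹ * L ^ (-d / 2) := by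
    rw [← Real.rpow_mul hX.le, neg_mul, inv_mul_cancel₀ hp.ne', Real.rpow_neg_one, mul_inv,
      neg_div, Real.rpow_neg hL.le]
  have hXq : ((X ^ (-p⁻¹)) ^ q)⁻¹ = H ^ (2 / d) * L := by
    rw [← Real.rpow_mul hX.le, neg_mul, Real.rpow_neg hX.le, inv_inv,
      show p⁻¹ * q = 2 / d by simp only [p, q]; field_simp; ring,
      Real.mul_rpow hH.le (by positivity), ← Real.rpow_mul hL.le,
      show d / 2 * (2 / d) = 1 by field_simp, Real.rpow_one]
  calc s * t = t * s := mul_comm s t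
    _ ≤ _ := Real.young_inequality_of_nonneg_of_pos ht hs (Real.rpow_pos_of_pos hX _) hpq
    _ = _ := by
      rw [hXp, hXq]; simp only [p, q]; field_simp; ring

theorem Monotone.tsum_max_sub_eq_sum_range {lam : ℕ → ℝ} (hmono : Monotone lam) (k : ℕ) :
    ∑' j, max (lam k - lam j) 0 = ∑ j ∈ range k, (lam k - lam j) := by
  rw [tsum_eq_sum (s := range k) fun j hj ↦
    max_eq_right (sub_nonpos.2 (hmono (not_lt.1 (mem_range.not.1 hj))))]
  exact sum_congr rfl fun j hj ↦ max_eq_left (sub_nonneg.2 (hmono (mem_range.1 hj).le))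

theorem stmt_0_general (d : ℕ) (hd : 1 ≤ d) (H : ℝ) (hH : 0 < H)
    (lam : ℕ → ℝ) (hmono : Monotone lam) (hpos : ∀ j, 0 < lam j)
    (hbound : ∀ μ : ℝ, 0 ≤ μ →
      (2 / ((d : ℝ) + 2)) * H⁻¹ * lam 0 ^ (-(d : ℝ) / 2) *
        (max (μ - lam 0) 0) ^ (1 + (d : ℝ) / 2) ≤ ∑' j, max (μ - lam j) 0)
    (k : ℕ) :
    ∑ j ∈ Finset.range k, (lam j - lam 0) ≤
      ((d : ℝ) / ((d : ℝ) + 2)) * H ^ ((2 : ℝ) / d) * lam 0 * (k : ℝ) ^ (1 + 2 / (d : ℝ)) := by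
  have hgap : 0 ≤ lam k - lam 0 := sub_nonneg.2 (hmono k.zero_le)
  -- `lam k` is the paper's `λ_{k+1}`
  have hriesz := hbound (lam k) (hpos k).le
  rw [hmono.tsum_max_sub_eq_sum_range, max_eq_left hgap] at hriesz
  have hsplit : ∑ j ∈ range k, (lam j - lam 0)
      = k * (lam k - lam 0) - ∑ j ∈ range k, (lam k - lam j) := by
    simp only [sum_sub_distrib, sum_const, card_range, nsmul_eq_mul]
    ring
  have hlegendre := mul_le_riesz_add_legendre (Nat.cast_pos.2 hd) hH (hpos 0) k.cast_nonneg hgap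
  rw [hsplit]
  linarith

/-- Legendre-transform deduction of the eigenvalue-sum bound from the Riesz-mean bound. -/
theorem stmt_0 (d : ℕ) (hd : 1 ≤ d) (H : ℝ) (hH : 0 < H)
    (lam : ℕ → ℝ) (hmono : Monotone lam) (hpos : ∀ j, 0 < lam j)
    (htend : Tendsto lam atTop atTop)
    (hbound : ∀ μ : ℝ, 0 ≤ μ →
      (2 / ((d : ℝ) + 2)) * H⁻¹ * lam 0 ^ (-(d : ℝ) / 2) *
        (max (μ - lam 0) 0) ^ (1 + (d : ℝ) / 2) ≤ ∑' j, max (μ - lam j) 0)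
    (k : ℕ) (hk : 1 ≤ k) :
    ∑ j ∈ Finset.range k, (lam j - lam 0) ≤
      ((d : ℝ) / ((d : ℝ) + 2)) * H ^ ((2 : ℝ) / d) * lam 0 * (k : ℝ) ^ (1 + 2 / (d : ℝ)) :=
  stmt_0_general d hd H hH lam hmono hpos hbound k
end

section
/- Let (λ_j)_{j≥1} be a nondecreasing sequence of positive real numbers with λ_j → ∞, and let f(λ) := Σ_{j=1}^∞ (λ − λ_j)_+ for λ > 0 (the sum is finite for each λ since λ_j → ∞). Then for every real p > 0, sup_{λ > 0} ( p·λ − f(λ) ) = (p − ⌊p⌋)·λ_{⌊p⌋+1} + Σ_{j=1}^{⌊p⌋} λ_j, where ⌊p⌋ denotes the integer part of p. In particular, for p = k a positive integer the supremum equals Σ_{j=1}^k λ_j. -/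
/-!
For `⌊p⌋₊ = n`, the function `p μ - f μ` is bounded above by comparing `f μ` with its first
`n + 1` terms: `n μ - ∑_{j<n} λ_j + (p - n)(μ - λ_n) ≤ f μ`, because `0 ≤ p - n ≤ 1`.
The bound is attained at `μ = λ_n` (the paper's `λ_{n+1}`), where by monotonicity
`f λ_n = n λ_n - ∑_{j<n} λ_j` exactly.
-/

open Filter Finset

lemma summable_max_sub_zero {lam : ℕ → ℝ} (htend : Tendsto lam atTop atTop) (μ : ℝ) :
    Summable fun j => max (μ - lam j) 0 := by
  obtain ⟨N, hN⟩ := eventually_atTop.mp (htend.eventually_ge_atTop μ)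
  refine summable_of_ne_finset_zero (s := range N) fun j hj => ?_
  exact max_eq_right (sub_nonpos.mpr (hN j (by simpa using hj)))

lemma mul_le_max_zero {t x : ℝ} (ht₀ : 0 ≤ t) (ht₁ : t ≤ 1) : t * x ≤ max x 0 := by
  rcases le_total 0 x with hx | hx
  · exact (mul_le_of_le_one_left hx ht₁).trans (le_max_left _ _)
  · exact (mul_nonpos_of_nonneg_of_nonpos ht₀ hx).trans (le_max_right _ _)

lemma sum_range_sub_eq (lam : ℕ → ℝ) (μ : ℝ) (n : ℕ) :
    ∑ j ∈ range n, (μ - lam j) = n * μ - ∑ j ∈ range n, lam j := by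
  rw [sum_sub_distrib, sum_const, card_range, nsmul_eq_mul]

lemma mul_sub_tsum_max_sub_zero_le {lam : ℕ → ℝ} {μ : ℝ}
    (hsum : Summable fun j => max (μ - lam j) 0)
    {n : ℕ} {p : ℝ} (hnp : (n : ℝ) ≤ p) (hpn : p ≤ n + 1) :
    p * μ - ∑' j, max (μ - lam j) 0 ≤ (p - n) * lam n + ∑ j ∈ range n, lam j := by
  have hhead : ∑ j ∈ range (n + 1), max (μ - lam j) 0 ≤ ∑' j, max (μ - lam j) 0 :=
    hsum.sum_le_tsum _ fun j _ => le_max_right _ _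
  have hfirst : ∑ j ∈ range n, (μ - lam j) ≤ ∑ j ∈ range n, max (μ - lam j) 0 :=
    sum_le_sum fun j _ => le_max_left _ _
  have hlast : (p - n) * (μ - lam n) ≤ max (μ - lam n) 0 :=
    mul_le_max_zero (by linarith) (by linarith)
  rw [sum_range_succ] at hhead
  linarith [sum_range_sub_eq lam μ n]

lemma tsum_max_sub_self_zero_of_monotone {lam : ℕ → ℝ} (hmono : Monotone lam) (n : ℕ) :
    ∑' j, max (lam n - lam j) 0 = n * lam n - ∑ j ∈ range n, lam j := by
  rw [tsum_eq_sum (s := range n) fun j hj =>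
    max_eq_right (sub_nonpos.mpr (hmono (by simpa using hj)))]
  rw [← sum_range_sub_eq, sum_congr rfl fun j hj =>
    max_eq_left (sub_nonneg.mpr (hmono (mem_range.mp hj).le))]

/-- Legendre transform of the Riesz mean `f(λ) = ∑_j (λ - λ_j)_+`. -/
theorem stmt_1 (lam : ℕ → ℝ) (hmono : Monotone lam) (hpos : ∀ j, 0 < lam j)
    (htend : Tendsto lam atTop atTop)
    (f : ℝ → ℝ) (hf : ∀ μ, f μ = ∑' j, max (μ - lam j) 0)
    (p : ℝ) (hp : 0 < p) :
    sSup {y : ℝ | ∃ μ : ℝ, 0 < μ ∧ y = p * μ - f μ} =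
      (p - (⌊p⌋₊ : ℝ)) * lam ⌊p⌋₊ + ∑ j ∈ Finset.range ⌊p⌋₊, lam j := by
  refine IsGreatest.csSup_eq ⟨⟨lam ⌊p⌋₊, hpos _, ?_⟩, ?_⟩
  · rw [hf, tsum_max_sub_self_zero_of_monotone hmono]
    ring
  · rintro y ⟨μ, -, rfl⟩
    rw [hf]
    exact mul_sub_tsum_max_sub_zero_le (summable_max_sub_zero htend μ) (Nat.floor_le hp.le)
      (Nat.lt_floor_add_one p).le
end

section
/- Let d ≥ 1 be an integer, H > 0, k ≥ 1 an integer, and let 0 < λ_1 ≤ λ_2 ≤ … ≤ λ_{k+1} be real numbers. Assume that (2/(d+2)) · H^{−1} · λ_1^{−d/2} · (λ_{k+1} − λ_1)^{1+d/2} ≤ Σ_{j=1}^k (λ_{k+1} − λ_j). Then λ_{k+1} ≤ ( 1 + (1 + d/2)^{2/d} · H^{2/d} · k^{2/d} ) · λ_1. -/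
open Finset

/-!
Bounding every gap `λ_{k+1} - λ_j` by `λ_{k+1} - λ_1` turns the Riesz-mean inequality into
`λ_1^{-d/2} D^{1+d/2} ≤ (1 + d/2) H k D` for `D = λ_{k+1} - λ_1`. Cancelling one factor `D` leaves
`D^{d/2} ≤ (1 + d/2) H k λ_1^{d/2}`, and taking `2/d`-th powers gives the bound.
-/

theorem Real.le_rpow_inv_mul_of_rpow_neg_mul_rpow_one_add_le {D μ C p : ℝ} (hD : 0 ≤ D)
    (hμ : 0 < μ) (hC : 0 ≤ C) (hp : 0 < p) (h : μ ^ (-p) * D ^ (1 + p) ≤ C * D) :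
    D ≤ C ^ p⁻¹ * μ := by
  rcases hD.eq_or_lt with rfl | hD
  · positivity
  have hDp : D ^ p ≤ C * μ ^ p := by
    rw [Real.rpow_add hD, Real.rpow_one, Real.rpow_neg hμ.le] at h
    have h' : D * (D ^ p / μ ^ p) ≤ D * C := by
      calc D * (D ^ p / μ ^ p) = (μ ^ p)⁻¹ * (D * D ^ p) := by ring
        _ ≤ C * D := h
        _ = D * C := mul_comm C D
    rw [← div_le_iff₀ (by positivity)]
    exact le_of_mul_le_mul_left h' hD
  have hRHS : (C ^ p⁻¹ * μ) ^ p = C * μ ^ p := by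
    rw [Real.mul_rpow (by positivity) hμ.le, Real.rpow_inv_rpow hC hp.ne']
  rwa [← Real.rpow_le_rpow_iff hD.le (by positivity) hp, hRHS]

theorem sum_sub_le_card_mul_sub {ι : Type*} (s : Finset ι) (f : ι → ℝ) {a b : ℝ}
    (h : ∀ j ∈ s, a ≤ f j) : ∑ j ∈ s, (b - f j) ≤ #s * (b - a) := by
  simpa using Finset.sum_le_card_nsmul s (fun j => b - f j) (b - a)
    (fun j hj => sub_le_sub_left (h j hj) b)

theorem stmt_3_general (d : ℕ) (hd : 1 ≤ d) (H : ℝ) (hH : 0 < H) (k : ℕ)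
    (lam : ℕ → ℝ) (hpos : 0 < lam 1)
    (hmono : ∀ i j, 1 ≤ i → i ≤ j → j ≤ k + 1 → lam i ≤ lam j)
    (hineq : (2 / ((d : ℝ) + 2)) * H⁻¹ * lam 1 ^ (-(d : ℝ) / 2) *
        (lam (k + 1) - lam 1) ^ (1 + (d : ℝ) / 2)
      ≤ ∑ j ∈ Finset.Icc 1 k, (lam (k + 1) - lam j)) :
    lam (k + 1) ≤
      (1 + (1 + (d : ℝ) / 2) ^ ((2 : ℝ) / d) * H ^ ((2 : ℝ) / d) * (k : ℝ) ^ ((2 : ℝ) / d)) *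
        lam 1 := by
  set D := lam (k + 1) - lam 1
  have hD : 0 ≤ D := sub_nonneg.2 (hmono 1 (k + 1) le_rfl (by omega) le_rfl)
  have hd' : (0 : ℝ) < d := by exact_mod_cast hd
  have hsum : ∑ j ∈ Finset.Icc 1 k, (lam (k + 1) - lam j) ≤ k * D := by
    simpa using sum_sub_le_card_mul_sub (Icc 1 k) lam
      (fun j hj => hmono 1 j le_rfl (mem_Icc.1 hj).1 (by grind))
  have hriesz : lam 1 ^ (-((d : ℝ) / 2)) * D ^ (1 + (d : ℝ) / 2) ≤ ((1 + d / 2) * H * k) * D := by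
    calc lam 1 ^ (-((d : ℝ) / 2)) * D ^ (1 + (d : ℝ) / 2)
        = (1 + d / 2) * H * (2 / ((d : ℝ) + 2) * H⁻¹ * lam 1 ^ (-(d : ℝ) / 2) *
            D ^ (1 + (d : ℝ) / 2)) := by
          rw [neg_div]; field_simp; ring
      _ ≤ (1 + d / 2) * H * (k * D) := mul_le_mul_of_nonneg_left (hineq.trans hsum) (by positivity)
      _ = ((1 + d / 2) * H * k) * D := by ring
  have hbound := Real.le_rpow_inv_mul_of_rpow_neg_mul_rpow_one_add_le hD hpos (by positivity)
    (by positivity) hriesz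
  rw [inv_div, Real.mul_rpow (by positivity) (by positivity),
    Real.mul_rpow (by positivity) hH.le] at hbound
  linarith

/-- First eigenvalue-ratio bound from the Riesz-mean inequality at `λ = λ_{k+1}`. -/
theorem stmt_3 (d : ℕ) (hd : 1 ≤ d) (H : ℝ) (hH : 0 < H) (k : ℕ) (hk : 1 ≤ k)
    (lam : ℕ → ℝ) (hpos : 0 < lam 1)
    (hmono : ∀ i j, 1 ≤ i → i ≤ j → j ≤ k + 1 → lam i ≤ lam j)
    (hineq : (2 / ((d : ℝ) + 2)) * H⁻¹ * lam 1 ^ (-(d : ℝ) / 2) *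
        (lam (k + 1) - lam 1) ^ (1 + (d : ℝ) / 2)
      ≤ ∑ j ∈ Finset.Icc 1 k, (lam (k + 1) - lam j)) :
    lam (k + 1) ≤
      (1 + (1 + (d : ℝ) / 2) ^ ((2 : ℝ) / d) * H ^ ((2 : ℝ) / d) * (k : ℝ) ^ ((2 : ℝ) / d)) *
        lam 1 :=
  stmt_3_general d hd H hH k lam hpos hmono hineq
end

section
/- Let d > 0 be a real number, k ≥ 1 an integer, and let 0 < λ_1 ≤ λ_2 ≤ … ≤ λ_{k+1} be real numbers with λ_j < λ_{k+1} for all 1 ≤ j ≤ k, satisfying the Yang inequality Σ_{j=1}^k (λ_{k+1} − λ_j)·(λ_{k+1} − (1 + 4/d)·λ_j) ≤ 0. Then (1/k) · Σ_{j=1}^k λ_j/(λ_{k+1} − λ_j) ≥ d/4. -/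
/-!
Put `a i = L - λ i > 0`. Yang's inequality says `∑ a i ^ 2 ≤ (4 / d) ∑ a i λ i`; in particular the
right-hand side is positive, so `L > 0`. Then `λ ↦ λ / (L - λ)` is increasing below `L` while
`λ ↦ (L - λ) ^ 2` is decreasing, so Chebyshev's sum inequality applied to `a i ^ 2` and `λ i / a i`
gives `#s ∑ a i λ i ≤ (∑ a i ^ 2) ∑ λ i / a i ≤ (4 / d) (∑ a i λ i) ∑ λ i / a i`, and dividing by
`∑ a i λ i` yields the Hile–Protter inequality.
-/

open Finset

lemma strictMonoOn_div_sub_self {L : ℝ} (hL : 0 < L) :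
    StrictMonoOn (fun x => x / (L - x)) (Set.Iio L) := by
  intro x hx y hy hxy
  rw [Set.mem_Iio] at hx hy
  rw [div_lt_div_iff₀ (sub_pos.2 hx) (sub_pos.2 hy)]
  nlinarith

lemma card_mul_sum_sub_mul_le_sum_sq_mul_sum_div {ι : Type*} (s : Finset ι) {L : ℝ} (hL : 0 < L)
    {lam : ι → ℝ} (hlt : ∀ i ∈ s, lam i < L) :
    (#s : ℝ) * ∑ i ∈ s, (L - lam i) * lam i ≤
      (∑ i ∈ s, (L - lam i) ^ 2) * ∑ i ∈ s, lam i / (L - lam i) := by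
  have hanti : AntivaryOn (fun i => (L - lam i) ^ 2) (fun i => lam i / (L - lam i)) s := by
    intro i hi j hj hij
    have hij' : lam i < lam j :=
      (strictMonoOn_div_sub_self hL).lt_iff_lt (hlt i hi) (hlt j hj) |>.mp hij
    exact pow_le_pow_left₀ (sub_nonneg.2 (hlt j hj).le) (by linarith) 2
  have hprod : ∀ i ∈ s, (L - lam i) * lam i = (L - lam i) ^ 2 * (lam i / (L - lam i)) := by
    intro i hi
    have := (sub_pos.2 (hlt i hi)).ne'
    field_simp
  rw [sum_congr rfl hprod]
  exact hanti.card_mul_sum_le_sum_mul_sum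

theorem hileProtter_of_yang {ι : Type*} {s : Finset ι} (hs : s.Nonempty) {d L : ℝ} (hd : 0 < d)
    {lam : ι → ℝ} (hlt : ∀ i ∈ s, lam i < L)
    (hyang : ∑ i ∈ s, (L - lam i) * (L - (1 + 4 / d) * lam i) ≤ 0) :
    d / 4 * #s ≤ ∑ i ∈ s, lam i / (L - lam i) := by
  set S := ∑ i ∈ s, (L - lam i) ^ 2
  set U := ∑ i ∈ s, (L - lam i) * lam i
  set T := ∑ i ∈ s, lam i / (L - lam i)
  have hSU : S ≤ 4 / d * U := by
    have : ∑ i ∈ s, (L - lam i) * (L - (1 + 4 / d) * lam i) = S - 4 / d * U := by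
      rw [mul_sum, ← sum_sub_distrib]
      exact sum_congr rfl fun i _ => by ring
    linarith
  have hS : 0 < S := sum_pos (fun i hi => pow_pos (sub_pos.2 (hlt i hi)) 2) hs
  have hU : 0 < U := pos_of_mul_pos_right (hS.trans_le hSU) (by positivity)
  have hL : 0 < L := by
    obtain ⟨i, hi, hpos⟩ := exists_lt_of_sum_lt (s := s) (f := fun _ => (0 : ℝ))
      (g := fun i => (L - lam i) * lam i) (by rwa [sum_const_zero])
    have hgap : 0 < L - lam i := sub_pos.2 (hlt i hi)
    have hlam : 0 < lam i := pos_of_mul_pos_right hpos hgap.le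
    linarith
  have hcheb : (#s : ℝ) * U ≤ S * T := card_mul_sum_sub_mul_le_sum_sq_mul_sum_div s hL hlt
  have hT : 0 < T := pos_of_mul_pos_right ((by positivity : (0 : ℝ) < #s * U).trans_le hcheb) hS.le
  have hcard : (#s : ℝ) * U ≤ 4 / d * T * U := calc
    (#s : ℝ) * U ≤ S * T := hcheb
    _ ≤ 4 / d * U * T := mul_le_mul_of_nonneg_right hSU hT.le
    _ = 4 / d * T * U := by ring
  calc d / 4 * #s ≤ d / 4 * (4 / d * T) := by gcongr; exact le_of_mul_le_mul_right hcard hU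
    _ = T := by field_simp

theorem stmt_6_general (d : ℝ) (hd : 0 < d) (k : ℕ) (hk : 1 ≤ k)
    (lam : ℕ → ℝ)
    (hlt : ∀ j, 1 ≤ j → j ≤ k → lam j < lam (k + 1))
    (hyang : ∑ j ∈ Finset.Icc 1 k,
      (lam (k + 1) - lam j) * (lam (k + 1) - (1 + 4 / d) * lam j) ≤ 0) :
    d / 4 ≤ (1 / (k : ℝ)) * ∑ j ∈ Finset.Icc 1 k, lam j / (lam (k + 1) - lam j) := by
  have hp := hileProtter_of_yang (nonempty_Icc.2 hk) hd
    (fun j hj => hlt j (mem_Icc.1 hj).1 (mem_Icc.1 hj).2) hyang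
  rw [Nat.card_Icc, Nat.add_sub_cancel] at hp
  have hk' : (0 : ℝ) < k := by exact_mod_cast hk
  rw [one_div_mul_eq_div, le_div_iff₀ hk']
  exact hp

/-- The quadratic Yang inequality implies the Hile–Protter inequality (HP). -/
theorem stmt_6 (d : ℝ) (hd : 0 < d) (k : ℕ) (hk : 1 ≤ k)
    (lam : ℕ → ℝ) (hpos : 0 < lam 1)
    (hmono : ∀ i j, 1 ≤ i → i ≤ j → j ≤ k + 1 → lam i ≤ lam j)
    (hlt : ∀ j, 1 ≤ j → j ≤ k → lam j < lam (k + 1))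
    (hyang : ∑ j ∈ Finset.Icc 1 k,
      (lam (k + 1) - lam j) * (lam (k + 1) - (1 + 4 / d) * lam j) ≤ 0) :
    d / 4 ≤ (1 / (k : ℝ)) * ∑ j ∈ Finset.Icc 1 k, lam j / (lam (k + 1) - lam j) :=
  stmt_6_general d hd k hk lam hlt hyang
end

section
/- Let d ≥ 2 be an integer, v_d := π^{d/2}/Γ(1 + d/2), let L > 0 and λ > 0, and let w : [0, L] → ℝ be a continuously differentiable, nonnegative, nonincreasing function with w(L) = 0 satisfying, for all s ∈ (0, L), the integro-differential inequality −w′(s) ≤ d^{−2} · v_d^{−2/d} · λ · s^{−2+2/d} · ∫_0^s w(t) dt. Then d² · v_d^{2/d} · ∫_0^L w′(s)² · s^{2−2/d} ds ≤ λ · ∫_0^L w(s)² ds. -/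
open Real intervalIntegral MeasureTheory Set Topology

/-
With `W(s) = ∫₀ˢ w`, integration by parts and `w(L) = W(0) = 0` give
`∫₀ᴸ w² = -∫₀ᴸ w' W`. As `w` is nonincreasing, `-w' ≥ 0`, so multiplying the hypothesis
by `-w' s^{2-2/d}` (the factors `s^{∓(2-2/d)}` cancel) bounds `w'² s^{2-2/d}` pointwise
by `d⁻² v_d^{-2/d} λ (-w' W)`; integrate.
-/

theorem HasDerivAt.nonpos_of_antitoneOn {g : ℝ → ℝ} {g' x : ℝ} {s : Set ℝ}
    (hd : HasDerivAt g g' x) (hg : AntitoneOn g s) (hs : s ∈ 𝓝 x) : g' ≤ 0 :=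
  hd.hasDerivWithinAt.derivWithin (uniqueDiffWithinAt_of_mem_nhds hs) ▸ hg.derivWithin_nonpos

section EnergyBound

variable {a b : ℝ} {w w' : ℝ → ℝ}

theorem ContinuousOn.continuousOn_primitive (hab : a ≤ b) (hw : ContinuousOn w (Icc a b)) :
    ContinuousOn (fun s ↦ ∫ t in a..s, w t) (Icc a b) := by
  simpa only [uIcc_of_le hab] using
    continuousOn_primitive_interval' (hw.intervalIntegrable_of_Icc hab) left_mem_uIcc

theorem hasDerivAt_primitive_of_mem_Ioo (hw : ContinuousOn w (Icc a b))
    {s : ℝ} (hs : s ∈ Ioo a b) : HasDerivAt (fun x ↦ ∫ t in a..x, w t) (w s) s := by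
  have hIoo : ContinuousOn w (Ioo a b) := hw.mono Ioo_subset_Icc_self
  refine integral_hasDerivAt_right ?_ (hIoo.stronglyMeasurableAtFilter isOpen_Ioo s hs)
    (hIoo.continuousAt (isOpen_Ioo.mem_nhds hs))
  exact (hw.mono (Icc_subset_Icc_right hs.2.le)).intervalIntegrable_of_Icc hs.1.le

theorem integral_sq_eq_neg_integral_deriv_mul_primitive (hab : a ≤ b)
    (hw : ContinuousOn w (Icc a b)) (hderiv : ∀ s ∈ Ioo a b, HasDerivAt w (w' s) s)
    (hw' : IntervalIntegrable w' volume a b) (hwb : w b = 0) :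
    ∫ s in a..b, w s ^ 2 = -∫ s in a..b, w' s * ∫ t in a..s, w t := by
  have hparts := integral_mul_deriv_eq_deriv_mul_of_hasDerivAt (u := w) (u' := w') (v' := w)
    (by rwa [uIcc_of_le hab]) (by rw [uIcc_of_le hab]; exact hw.continuousOn_primitive hab)
    (by simpa only [min_eq_left hab, max_eq_right hab] using hderiv)
    (by simpa only [min_eq_left hab, max_eq_right hab] using
      fun s hs ↦ hasDerivAt_primitive_of_mem_Ioo hw hs)
    hw' (hw.intervalIntegrable_of_Icc hab)
  simpa only [sq, hwb, integral_same, zero_mul, mul_zero, sub_zero, zero_sub] using hparts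

theorem integral_sq_deriv_mul_le_of_neg_deriv_mul_le {K : ℝ} {ρ : ℝ → ℝ} (hab : a ≤ b)
    (hw : ContinuousOn w (Icc a b)) (hderiv : ∀ s ∈ Ioo a b, HasDerivAt w (w' s) s)
    (hw' : ContinuousOn w' (Icc a b)) (hρ : ContinuousOn ρ (Icc a b))
    (hanti : AntitoneOn w (Icc a b)) (hwb : w b = 0)
    (hineq : ∀ s ∈ Ioo a b, -w' s * ρ s ≤ K * ∫ t in a..s, w t) :
    ∫ s in a..b, w' s ^ 2 * ρ s ≤ K * ∫ s in a..b, w s ^ 2 := by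
  rw [integral_sq_eq_neg_integral_deriv_mul_primitive hab hw hderiv
    (hw'.intervalIntegrable_of_Icc hab) hwb, mul_neg, ← intervalIntegral.integral_const_mul,
    ← intervalIntegral.integral_neg]
  refine integral_mono_on_of_le_Ioo hab (((hw'.pow 2).mul hρ).intervalIntegrable_of_Icc hab)
    ((continuousOn_const.mul (hw'.mul (hw.continuousOn_primitive hab))).neg
      |>.intervalIntegrable_of_Icc hab) fun s hs ↦ ?_
  have hw's : 0 ≤ -w' s :=
    neg_nonneg.mpr ((hderiv s hs).nonpos_of_antitoneOn hanti (Icc_mem_nhds hs.1 hs.2))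
  calc w' s ^ 2 * ρ s = -w' s * (-w' s * ρ s) := by ring
    _ ≤ -w' s * (K * ∫ t in a..s, w t) := mul_le_mul_of_nonneg_left (hineq s hs) hw's
    _ = -(K * (w' s * ∫ t in a..s, w t)) := by ring

end EnergyBound

theorem stmt_11_general (d : ℕ) (hd : 2 ≤ d)
    (vd : ℝ) (hvd : vd = Real.pi ^ ((d : ℝ) / 2) / Real.Gamma (1 + (d : ℝ) / 2))
    (L lam : ℝ) (hL : 0 < L)
    (w w' : ℝ → ℝ)
    (hderiv : ∀ s ∈ Set.Icc (0 : ℝ) L, HasDerivAt w (w' s) s)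
    (hw'cont : ContinuousOn w' (Set.Icc 0 L))
    (hanti : AntitoneOn w (Set.Icc 0 L))
    (hwL : w L = 0)
    (hineq : ∀ s ∈ Set.Ioo (0 : ℝ) L,
      -w' s ≤ ((d : ℝ) ^ 2)⁻¹ * vd ^ (-(2 : ℝ) / d) * lam * s ^ (-2 + 2 / (d : ℝ)) *
        ∫ τ in (0 : ℝ)..s, w τ) :
    (d : ℝ) ^ 2 * vd ^ ((2 : ℝ) / d) * ∫ s in (0 : ℝ)..L, (w' s) ^ 2 * s ^ (2 - 2 / (d : ℝ)) ≤
      lam * ∫ s in (0 : ℝ)..L, (w s) ^ 2 := by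
  have hd0 : (0 : ℝ) < d := by positivity
  have hvd0 : 0 < vd := hvd ▸ div_pos (by positivity) (Gamma_pos_of_pos (by positivity))
  set K := ((d : ℝ) ^ 2)⁻¹ * vd ^ (-(2 : ℝ) / d) * lam with hK
  have hweighted : ∀ s ∈ Ioo (0 : ℝ) L,
      -w' s * s ^ (2 - 2 / (d : ℝ)) ≤ K * ∫ τ in (0 : ℝ)..s, w τ := by
    intro s hs
    have hcancel : s ^ (-2 + 2 / (d : ℝ)) * s ^ (2 - 2 / (d : ℝ)) = 1 := by
      rw [← rpow_add hs.1]; norm_num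
    calc -w' s * s ^ (2 - 2 / (d : ℝ))
        ≤ K * s ^ (-2 + 2 / (d : ℝ)) * (∫ τ in (0 : ℝ)..s, w τ) *
            s ^ (2 - 2 / (d : ℝ)) :=
          mul_le_mul_of_nonneg_right (hineq s hs) (rpow_nonneg hs.1.le _)
      _ = K * ∫ τ in (0 : ℝ)..s, w τ := by
          linear_combination K * (∫ τ in (0 : ℝ)..s, w τ) * hcancel
  have hexp : 0 ≤ 2 - 2 / (d : ℝ) := by
    rw [sub_nonneg, div_le_iff₀ hd0]; exact_mod_cast (by omega : 2 ≤ 2 * d)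
  have henergy := integral_sq_deriv_mul_le_of_neg_deriv_mul_le hL.le
    (fun s hs ↦ (hderiv s hs).continuousAt.continuousWithinAt)
    (fun s hs ↦ hderiv s (Ioo_subset_Icc_self hs)) hw'cont
    (continuous_rpow_const hexp).continuousOn hanti hwL hweighted
  have hcK : (d : ℝ) ^ 2 * vd ^ ((2 : ℝ) / d) * K = lam := by
    rw [hK, neg_div, rpow_neg hvd0.le]
    field_simp
  calc _ ≤ (d : ℝ) ^ 2 * vd ^ ((2 : ℝ) / d) * (K * ∫ s in (0 : ℝ)..L, w s ^ 2) :=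
        mul_le_mul_of_nonneg_left henergy (by positivity)
    _ = lam * ∫ s in (0 : ℝ)..L, w s ^ 2 := by rw [← mul_assoc, hcK]

/-- The weighted Dirichlet energy of a function satisfying the rearrangement
integro-differential inequality is bounded by `λ` times its `L²` norm. -/
theorem stmt_11 (d : ℕ) (hd : 2 ≤ d)
    (vd : ℝ) (hvd : vd = Real.pi ^ ((d : ℝ) / 2) / Real.Gamma (1 + (d : ℝ) / 2))
    (L lam : ℝ) (hL : 0 < L) (hlam : 0 < lam)
    (w w' : ℝ → ℝ)
    (hderiv : ∀ s ∈ Set.Icc (0 : ℝ) L, HasDerivAt w (w' s) s)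
    (hw'cont : ContinuousOn w' (Set.Icc 0 L))
    (hnonneg : ∀ s ∈ Set.Icc (0 : ℝ) L, 0 ≤ w s)
    (hanti : AntitoneOn w (Set.Icc 0 L))
    (hwL : w L = 0)
    (hineq : ∀ s ∈ Set.Ioo (0 : ℝ) L,
      -w' s ≤ ((d : ℝ) ^ 2)⁻¹ * vd ^ (-(2 : ℝ) / d) * lam * s ^ (-2 + 2 / (d : ℝ)) *
        ∫ τ in (0 : ℝ)..s, w τ) :
    (d : ℝ) ^ 2 * vd ^ ((2 : ℝ) / d) * ∫ s in (0 : ℝ)..L, (w' s) ^ 2 * s ^ (2 - 2 / (d : ℝ)) ≤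
      lam * ∫ s in (0 : ℝ)..L, (w s) ^ 2 :=
  stmt_11_general d hd vd hvd L lam hL w w' hderiv hw'cont hanti hwL hineq
end
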